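/- arXiv:1811.08709 — 4 statements merged into one kernel-verified Lean document; each statement's English description precedes it below -/
import Mathlib

section
/- For 1/4 < p < 1, the number q = 1/√p - 1 satisfies 0 < q < 1 and solves 1 - q - p(1 + q - q^2 - q^3) = 0. -/
theorem stmt2 (p : ℝ) (hp0 : 1 / 4 < p) (hp1 : p < 1) :
    0 < 1 / Real.sqrt p - 1 ∧ 1 / Real.sqrt p - 1 < 1 ∧
      (1 - (1 / Real.sqrt p - 1) -
        p * (1 + (1 / Real.sqrt p - 1) - (1 / Real.sqrt p - 1) ^ 2 -
          (1 / Real.sqrt p - 1) ^ 3) = 0) := by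
  have hp : (0:ℝ) < p := by linarith
  set s := Real.sqrt p with hs
  have hs0 : 0 < s := Real.sqrt_pos.mpr hp
  have hs2 : s ^ 2 = p := Real.sq_sqrt hp.le
  have hs1 : s < 1 := by nlinarith
  have hshalf : 1 / 2 < s := by nlinarith
  refine ⟨by rw [lt_sub_iff_add_lt, zero_add, lt_div_iff₀ hs0]; linarith, ?_, ?_⟩
  · rw [sub_lt_iff_lt_add, div_lt_iff₀ hs0]; linarith
  · rw [← hs2]
    field_simp
    ring
end

section
/- For any real α and any R > 1, the sum ∑_{k ≥ n, k odd} k^{-α} R^{-k} over odd k is asymptotically equivalent to (R²/(R²-1)) · n^{-α} R^{-n} as n → ∞ along odd n. -/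
open Filter Real Topology

theorem stmt14 (α R : ℝ) (hR : 1 < R) :
    Filter.Tendsto
      (fun m : ℕ =>
        (∑' k : ℕ, if 2 * m + 1 ≤ k ∧ Odd k then (k : ℝ) ^ (-α) * R ^ (-(k : ℝ)) else 0) /
          (R ^ 2 / (R ^ 2 - 1) * ((2 * m + 1 : ℕ) : ℝ) ^ (-α) *
            R ^ (-((2 * m + 1 : ℕ) : ℝ))))
      Filter.atTop (nhds 1) := by
  have hR0 : (0:ℝ) < R := lt_trans one_pos hR
  have hR2 : (1:ℝ) < R ^ 2 := by nlinarith
  set q : ℝ := (R ^ 2)⁻¹ with hqdef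
  have hq0 : 0 < q := by positivity
  have hq1 : q < 1 := inv_lt_one_of_one_lt₀ hR2
  set c : ℝ := (R ^ 2 - 1) / R ^ 2 with hcdef
  have hc0 : 0 < c := div_pos (by linarith) (by positivity)
  set Nn : ℕ := ⌈|α|⌉₊ with hNn
  -- the reindexed/divided form of the ratio
  set f : ℕ → ℕ → ℝ := fun m j =>
    (((2 * m + 1 + 2 * j : ℕ) : ℝ) / ((2 * m + 1 : ℕ) : ℝ)) ^ (-α) * q ^ j * c with hf
  have key : ∀ m : ℕ,
      (∑' k : ℕ, if 2 * m + 1 ≤ k ∧ Odd k then (k : ℝ) ^ (-α) * R ^ (-(k : ℝ)) else 0) /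
        (R ^ 2 / (R ^ 2 - 1) * ((2 * m + 1 : ℕ) : ℝ) ^ (-α) *
          R ^ (-((2 * m + 1 : ℕ) : ℝ))) = ∑' j : ℕ, f m j := by
    intro m
    set n : ℕ := 2 * m + 1 with hn
    have hN0 : (0:ℝ) < (n:ℝ) := by positivity
    -- reindex the numerator
    have hinj : Function.Injective (fun j : ℕ => n + 2 * j) := by
      intro a b hab; simpa using hab
    have hsupp : Function.support
        (fun k : ℕ => if n ≤ k ∧ Odd k then (k : ℝ) ^ (-α) * R ^ (-(k : ℝ)) else 0)
        ⊆ Set.range (fun j : ℕ => n + 2 * j) := by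
      intro k hk
      by_cases h : n ≤ k ∧ Odd k
      · obtain ⟨hk1, l, hl⟩ := h
        exact ⟨(k - n) / 2, by simp only; omega⟩
      · simp [h] at hk
    have hre : (∑' k : ℕ, if n ≤ k ∧ Odd k then (k : ℝ) ^ (-α) * R ^ (-(k : ℝ)) else 0)
        = ∑' j : ℕ, ((n + 2 * j : ℕ) : ℝ) ^ (-α) * R ^ (-((n + 2 * j : ℕ) : ℝ)) := by
      rw [← hinj.tsum_eq hsupp]
      refine tsum_congr fun j => ?_
      have : n ≤ n + 2 * j ∧ Odd (n + 2 * j) := ⟨by omega, ⟨m + j, by omega⟩⟩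
      simp [this]
    rw [hre, ← tsum_div_const]
    refine tsum_congr fun j => ?_
    -- per-term algebra
    have hcast : ((n + 2 * j : ℕ) : ℝ) = (n:ℝ) + 2 * j := by push_cast; ring
    have hpow : ((n + 2 * j : ℕ) : ℝ) ^ (-α)
        = (((n + 2 * j : ℕ) : ℝ) / (n:ℝ)) ^ (-α) * ((n:ℝ)) ^ (-α) := by
      rw [Real.div_rpow (by positivity) hN0.le, div_mul_cancel₀]
      exact (Real.rpow_pos_of_pos hN0 _).ne'
    have hexp : R ^ (-((n + 2 * j : ℕ) : ℝ)) = R ^ (-((n:ℕ):ℝ)) * q ^ j := by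
      have h1 : -((n + 2 * j : ℕ) : ℝ) = -((n:ℕ):ℝ) + (-2) * (j:ℕ) := by push_cast; ring
      rw [h1, Real.rpow_add hR0, Real.rpow_mul_natCast hR0.le]
      congr 1
      rw [show (-2:ℝ) = -(2:ℕ) by norm_num, Real.rpow_neg hR0.le, Real.rpow_natCast]
    rw [hpow, hexp, hf]
    simp only [← hn]
    have h1 : ((n:ℝ)) ^ (-α) ≠ 0 := (Real.rpow_pos_of_pos hN0 _).ne'
    have h2 : R ^ (-((n:ℕ):ℝ)) ≠ 0 := (Real.rpow_pos_of_pos hR0 _).ne'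
    have hcinv : R ^ 2 / (R ^ 2 - 1) = c⁻¹ := by rw [hcdef, inv_div]
    rw [hcinv]
    set X : ℝ := (((n + 2 * j : ℕ) : ℝ) / ((n:ℕ):ℝ)) ^ (-α) with hX
    clear_value q c
    field_simp
  -- now prove the tendsto of the tsum form
  have hmain : Tendsto (fun m => ∑' j, f m j) atTop (𝓝 (∑' j : ℕ, q ^ j * c)) := by
    apply tendsto_tsum_of_dominated_convergence
      (bound := fun j : ℕ => ((1 + 2 * (j:ℝ)) ^ Nn * q ^ j) * (2 ^ Nn * c))
    · -- summability of bound
      have hg : Summable (fun j : ℕ => ((j:ℝ) + 1) ^ Nn * q ^ j) := by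
        have h0 : Summable (fun j : ℕ => (j:ℝ) ^ Nn * q ^ j) :=
          summable_pow_mul_geometric_of_norm_lt_one Nn (by
            rw [Real.norm_eq_abs, abs_of_pos hq0]; exact hq1)
        rw [← summable_nat_add_iff 1] at h0
        have := h0.mul_right q⁻¹
        refine this.congr fun j => ?_
        push_cast
        field_simp
        ring
      exact (hg.mul_right _).of_nonneg_of_le
        (fun j => by positivity)
        (fun j => by
          have h1 : (1 + 2 * (j:ℝ)) ^ Nn ≤ (2 * ((j:ℝ) + 1)) ^ Nn := by
            apply pow_le_pow_left₀ (by positivity); linarith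
          have h2 : (0:ℝ) ≤ q ^ j * (2 ^ Nn * c) := by positivity
          calc (1 + 2 * (j:ℝ)) ^ Nn * q ^ j * (2 ^ Nn * c)
              ≤ (2 * ((j:ℝ) + 1)) ^ Nn * q ^ j * (2 ^ Nn * c) := by
                have := mul_le_mul_of_nonneg_right h1 h2
                calc (1 + 2 * (j:ℝ)) ^ Nn * q ^ j * (2 ^ Nn * c)
                    = (1 + 2 * (j:ℝ)) ^ Nn * (q ^ j * (2 ^ Nn * c)) := by ring
                  _ ≤ (2 * ((j:ℝ) + 1)) ^ Nn * (q ^ j * (2 ^ Nn * c)) := this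
                  _ = (2 * ((j:ℝ) + 1)) ^ Nn * q ^ j * (2 ^ Nn * c) := by ring
            _ = ((j:ℝ) + 1) ^ Nn * q ^ j * (2 ^ Nn * (2 ^ Nn * c)) := by
                rw [mul_pow]; ring)
    · -- pointwise convergence
      intro j
      have hbase : Tendsto (fun m : ℕ =>
          ((2 * m + 1 + 2 * j : ℕ) : ℝ) / ((2 * m + 1 : ℕ) : ℝ)) atTop (𝓝 1) := by
        have hA : Tendsto (fun m : ℕ => ((2 * m + 1 : ℕ) : ℝ)) atTop atTop := by
          refine tendsto_atTop_mono (fun m => ?_) tendsto_natCast_atTop_atTop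
          push_cast
          have : (0:ℝ) ≤ (m:ℝ) := by positivity
          linarith
        have h0 : Tendsto (fun m : ℕ => 2 * (j:ℝ) / ((2 * m + 1 : ℕ) : ℝ)) atTop (𝓝 0) := by
          simpa [div_eq_mul_inv] using hA.inv_tendsto_atTop.const_mul (2 * (j:ℝ))
        have : Tendsto (fun m : ℕ => 1 + 2 * (j:ℝ) / ((2 * m + 1 : ℕ) : ℝ)) atTop (𝓝 1) := by
          simpa using (tendsto_const_nhds (x := (1:ℝ))).add h0
        refine this.congr fun m => ?_
        have hN0 : ((2 * m + 1 : ℕ) : ℝ) ≠ 0 := by positivity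
        have hc2 : ((2 * m + 1 + 2 * j : ℕ) : ℝ) = ((2 * m + 1 : ℕ) : ℝ) + 2 * (j:ℝ) := by
          push_cast; ring
        rw [hc2, add_div, div_self hN0]
      have hrpow : Tendsto (fun m : ℕ =>
          (((2 * m + 1 + 2 * j : ℕ) : ℝ) / ((2 * m + 1 : ℕ) : ℝ)) ^ (-α)) atTop (𝓝 1) := by
        have hcont := (Real.continuousAt_rpow_const 1 (-α) (Or.inl one_ne_zero)).tendsto
        have := hcont.comp hbase
        simpa [Real.one_rpow, Function.comp_def] using this
      simpa [hf] using (hrpow.mul_const (q ^ j)).mul_const c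
    · -- uniform bound
      filter_upwards with m j
      have hN0 : (0:ℝ) < ((2 * m + 1 : ℕ) : ℝ) := by positivity
      set x : ℝ := ((2 * m + 1 + 2 * j : ℕ) : ℝ) / ((2 * m + 1 : ℕ) : ℝ) with hx
      have hx1 : 1 ≤ x := by
        rw [hx, le_div_iff₀ hN0]
        push_cast; linarith
      have hxle : x ≤ 1 + 2 * j := by
        rw [hx, div_le_iff₀ hN0]
        push_cast
        nlinarith [mul_nonneg (by positivity : (0:ℝ) ≤ (m:ℝ)) (by positivity : (0:ℝ) ≤ (j:ℝ))]
      have hb1 : x ^ (-α) ≤ x ^ |α| :=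
        Real.rpow_le_rpow_of_exponent_le hx1 (neg_le_abs α)
      have hb2 : x ^ |α| ≤ (1 + 2 * (j:ℝ)) ^ |α| :=
        Real.rpow_le_rpow (by linarith) hxle (abs_nonneg α)
      have hb3 : (1 + 2 * (j:ℝ)) ^ |α| ≤ (1 + 2 * (j:ℝ)) ^ (Nn:ℝ) :=
        Real.rpow_le_rpow_of_exponent_le
          (le_add_of_nonneg_right (by positivity)) (Nat.le_ceil _)
      have hb4 : (1 + 2 * (j:ℝ)) ^ (Nn:ℝ) = (1 + 2 * (j:ℝ)) ^ Nn := Real.rpow_natCast _ _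
      have hxb : x ^ (-α) ≤ (1 + 2 * (j:ℝ)) ^ Nn := by
        rw [← hb4]; exact hb1.trans (hb2.trans hb3)
      have hfnn : 0 ≤ f m j := by
        rw [hf]
        exact mul_nonneg (mul_nonneg (Real.rpow_nonneg (by linarith : (0:ℝ) ≤ x) _)
          (by positivity)) hc0.le
      rw [Real.norm_eq_abs, abs_of_nonneg hfnn, hf]
      have h2 : (0:ℝ) ≤ q ^ j * c := by positivity
      have h3 : (1:ℝ) ≤ 2 ^ Nn := one_le_pow₀ (by norm_num)
      calc x ^ (-α) * q ^ j * c ≤ (1 + 2 * (j:ℝ)) ^ Nn * q ^ j * c := by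
            have := mul_le_mul_of_nonneg_right hxb h2
            calc x ^ (-α) * q ^ j * c = x ^ (-α) * (q ^ j * c) := by ring
              _ ≤ (1 + 2 * (j:ℝ)) ^ Nn * (q ^ j * c) := this
              _ = (1 + 2 * (j:ℝ)) ^ Nn * q ^ j * c := by ring
        _ ≤ (1 + 2 * (j:ℝ)) ^ Nn * q ^ j * (2 ^ Nn * c) := by
            have hnn : (0:ℝ) ≤ (1 + 2 * (j:ℝ)) ^ Nn * q ^ j := by positivity
            nlinarith [mul_le_mul_of_nonneg_left (le_mul_of_one_le_left hc0.le h3) hnn]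
        _ = (1 + 2 * (j:ℝ)) ^ Nn * q ^ j * (2 ^ Nn * c) := rfl
  -- compute the limit sum
  have hsum : (∑' j : ℕ, q ^ j * c) = 1 := by
    rw [tsum_mul_right, tsum_geometric_of_lt_one hq0.le hq1]
    have : 1 - q = c := by
      rw [hcdef, hqdef]
      field_simp
    rw [this]
    exact inv_mul_cancel₀ hc0.ne'
  rw [hsum] at hmain
  exact hmain.congr fun m => (key m).symm
end

section
/- Let p = 1/4 and let f be a function analytic near z = 1 from the left on the reals with f(1) = 1 satisfying (1/4) z f(z)^4 - (3/2) z f(z)^2 + 2 f(z) - (3/4) z = 0 for real z near 1, z < 1. Then f(z) - 1 ~ -2^{1/3} (1-z)^{1/3} as z → 1⁻, i.e., lim_{z→1⁻} (f(z)-1)/(1-z)^{1/3} = -2^{1/3}. -/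
open Filter Set Real

private lemma cube_root_cube {x : ℝ} (hx : 0 < x) : ((x ^ (3 : ℕ)) : ℝ) ^ ((1 : ℝ) / 3) = x := by
  rw [← Real.rpow_natCast x 3, ← Real.rpow_mul hx.le]
  norm_num

theorem stmt15 (f : ℝ → ℝ) (ε : ℝ) (hε : 0 < ε)
    (heq : ∀ z ∈ Set.Ioo (1 - ε) (1 : ℝ),
      (1 / 4) * z * f z ^ 4 - (3 / 2) * z * f z ^ 2 + 2 * f z - (3 / 4) * z = 0)
    (hlim : Filter.Tendsto f (nhdsWithin 1 (Set.Iio 1)) (nhds 1)) :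
    Filter.Tendsto (fun z => (f z - 1) / (1 - z) ^ ((1 : ℝ) / 3))
      (nhdsWithin 1 (Set.Iio 1)) (nhds (-(2 : ℝ) ^ ((1 : ℝ) / 3))) := by
  set l := nhdsWithin (1 : ℝ) (Set.Iio 1) with hl
  have hz1 : ∀ᶠ z in l, z ∈ Set.Ioo (1 - ε) (1 : ℝ) := by
    have : Set.Ioo (1 - ε) (1 : ℝ) ∈ l :=
      Ioo_mem_nhdsLT_of_mem ⟨by linarith, le_refl 1⟩
    exact this
  have hD : Tendsto (fun z => f z ^ 4 - 6 * f z ^ 2 - 3) l (nhds (-8)) := by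
    have h : Tendsto (fun z => f z ^ 4 - 6 * f z ^ 2 - 3) l
        (nhds ((1 : ℝ) ^ 4 - 6 * 1 ^ 2 - 3)) :=
      ((hlim.pow 4).sub ((hlim.pow 2).const_mul 6)).sub tendsto_const_nhds
    norm_num at h
    exact h
  have hf3 : Tendsto (fun z => f z + 3) l (nhds 4) := by
    have h : Tendsto (fun z => f z + 3) l (nhds (1 + 3)) := hlim.add tendsto_const_nhds
    norm_num at h
    exact h
  have hf3ne : ∀ᶠ z in l, f z + 3 ≠ 0 := hf3.eventually_ne (by norm_num)
  -- key algebraic identity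
  have key : ∀ᶠ z in l, (f z - 1) ^ 3 * (f z + 3) = (1 - z) * (f z ^ 4 - 6 * f z ^ 2 - 3) := by
    filter_upwards [hz1] with z hz
    have h := heq z hz
    linear_combination 4 * h
  -- cube of the quotient tends to -2
  have hratio : Tendsto (fun z => (f z ^ 4 - 6 * f z ^ 2 - 3) / (f z + 3)) l (nhds (-2)) := by
    have h := hD.div hf3 (by norm_num)
    norm_num at h
    exact h
  have hcube_eq : ∀ᶠ z in l,
      ((f z - 1) / (1 - z) ^ ((1 : ℝ) / 3)) ^ 3
        = (f z ^ 4 - 6 * f z ^ 2 - 3) / (f z + 3) := by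
    filter_upwards [hz1, key, hf3ne] with z hz hkey hne
    have hpos : (0 : ℝ) < 1 - z := by linarith [hz.2]
    have hc : ((1 - z) ^ ((1 : ℝ) / 3)) ^ (3 : ℕ) = 1 - z := by
      rw [← Real.rpow_natCast ((1 - z) ^ ((1 : ℝ) / 3)) 3, ← Real.rpow_mul hpos.le]
      norm_num
    have hrne : (1 - z) ^ ((1 : ℝ) / 3) ≠ 0 := by
      intro h0
      rw [h0] at hc
      simp at hc
      linarith
    rw [div_pow, hc]
    rw [eq_div_iff hne, div_mul_eq_mul_div, div_eq_iff hpos.ne']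
    linarith [hkey]
  have hcube : Tendsto (fun z => ((f z - 1) / (1 - z) ^ ((1 : ℝ) / 3)) ^ 3) l (nhds (-2)) :=
    hratio.congr' (hcube_eq.mono fun z h => h.symm)
  -- eventually the quotient is negative
  have hneg : ∀ᶠ z in l, (f z - 1) / (1 - z) ^ ((1 : ℝ) / 3) < 0 := by
    have h := hcube.eventually (eventually_lt_nhds (show (-2 : ℝ) < 0 by norm_num))
    filter_upwards [h] with z hz
    by_contra hge
    push_neg at hge
    exact absurd hz (not_lt.2 (pow_nonneg hge 3))
  -- pass to the negation
  have hg3 : Tendsto (fun z => (-((f z - 1) / (1 - z) ^ ((1 : ℝ) / 3))) ^ 3) l (nhds 2) := by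
    have h := hcube.neg
    norm_num at h
    refine h.congr fun z => by ring
  have hg : Tendsto (fun z => -((f z - 1) / (1 - z) ^ ((1 : ℝ) / 3))) l
      (nhds ((2 : ℝ) ^ ((1 : ℝ) / 3))) := by
    have h := hg3.rpow_const (p := (1 : ℝ) / 3) (Or.inr (by norm_num))
    refine h.congr' ?_
    filter_upwards [hneg] with z hz
    exact cube_root_cube (by linarith)
  have := hg.neg
  simp only [neg_neg] at this
  exact this
end

section
/- For p ∈ (0,1), let σ ∈ [0,1] and suppose q̂ ∈ [0,1) satisfies p q̂³ + p q̂² - (1 + p(1-σ)) q̂ + (1 - p(1+σ)) = 0. Then q̂ = -1 + √(1/p - σ). -/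
theorem stmt17 (p σ q : ℝ) (hp0 : 0 < p) (hp1 : p < 1) (hσ0 : 0 ≤ σ) (hσ1 : σ ≤ 1)
    (hq0 : 0 ≤ q) (hq1 : q < 1)
    (h : p * q ^ 3 + p * q ^ 2 - (1 + p * (1 - σ)) * q + (1 - p * (1 + σ)) = 0) :
    q = -1 + Real.sqrt (1 / p - σ) := by
  have hfac : (q - 1) * (p * q ^ 2 + 2 * p * q + (σ + 1) * p - 1) = 0 := by
    linear_combination h
  have h2 : p * q ^ 2 + 2 * p * q + (σ + 1) * p - 1 = 0 := by
    rcases mul_eq_zero.mp hfac with h1 | h2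
    · linarith
    · exact h2
  have hs : 1 / p - σ = (q + 1) ^ 2 := by
    field_simp
    nlinarith [h2]
  rw [hs, Real.sqrt_sq (by linarith)]
  ring
end
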